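/- arXiv:2306.05161 — 3 statements merged into one kernel-verified Lean document; each statement's English description precedes it below -/
import Mathlib

section
/- Let V : [t₀, ∞) → ℝ be differentiable with V ≥ 0, and suppose V'(t) ≤ ω·max{V(t), V(t₀)} + c for all t ≥ t₀, where ω > 0 and c ≥ 0. Then V(t) ≤ e^{ω(t−t₀)}·V(t₀) + (c/ω)·e^{ω(t−t₀)} for all t ≥ t₀. -/
open Set

/-- The Grönwall barrier `gronwallBound (f a) K ε' (x - a)` is nondecreasing, so it stays above
`f a`; hence whenever `f` touches it, `max (f x) (f a) = f x` and the hypothesis becomes the usual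
linear Grönwall bound there. Strict slack `ε' > ε` gives the comparison, and `ε' → ε` concludes. -/
theorem le_gronwallBound_of_deriv_right_le_max {f f' : ℝ → ℝ} {K ε a b : ℝ}
    (hf : ContinuousOn f (Icc a b)) (hf' : ∀ x ∈ Ico a b, HasDerivWithinAt f (f' x) (Ici x) x)
    (hK : 0 ≤ K) (hε : 0 ≤ ε) (ha : 0 ≤ f a)
    (bound : ∀ x ∈ Ico a b, f' x ≤ K * max (f x) (f a) + ε) :
    ∀ x ∈ Icc a b, f x ≤ gronwallBound (f a) K ε (x - a) := by
  have slack : ∀ x ∈ Icc a b, ∀ ε' ∈ Ioi ε, f x ≤ gronwallBound (f a) K ε' (x - a) := by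
    intro x hx ε' (hε' : ε < ε')
    refine image_le_of_deriv_right_lt_deriv_boundary' hf hf' (by rw [sub_self, gronwallBound_x0])
      (fun y _ => (hasDerivAt_gronwallBound_shift _ K ε' y a).continuousAt.continuousWithinAt)
      (fun y _ => (hasDerivAt_gronwallBound_shift _ K ε' y a).hasDerivWithinAt) ?_ hx
    intro y hy hcontact
    have hfa_le : f a ≤ f y := by
      have := gronwallBound_mono ha (hε.trans hε'.le) hK (sub_nonneg.2 hy.1)
      rwa [gronwallBound_x0, ← hcontact] at this
    calc f' y ≤ K * f y + ε := max_eq_left hfa_le ▸ bound y hy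
      _ < K * gronwallBound (f a) K ε' (y - a) + ε' := by rw [hcontact]; linarith
  intro x hx
  exact ContinuousWithinAt.closure_le (f := fun _ => f x)
    (g := fun ε' => gronwallBound (f a) K ε' (x - a)) (by simp only [closure_Ioi, self_mem_Ici])
    continuousWithinAt_const (gronwallBound_continuous_ε _ K _).continuousWithinAt (slack x hx)

theorem gronwallBound_le_exp_mul_add {δ K ε : ℝ} (hK : 0 < K) (hε : 0 ≤ ε) (x : ℝ) :
    gronwallBound δ K ε x ≤ Real.exp (K * x) * δ + ε / K * Real.exp (K * x) := by
  rw [gronwallBound_of_K_ne_0 hK.ne']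
  have : 0 ≤ ε / K := div_nonneg hε hK.le
  nlinarith

theorem stmt_4 (t₀ ω c : ℝ) (V V' : ℝ → ℝ) (hω : 0 < ω) (hc : 0 ≤ c)
    (hVnonneg : ∀ t, t₀ ≤ t → 0 ≤ V t)
    (hderiv : ∀ t, t₀ ≤ t → HasDerivAt V (V' t) t)
    (hineq : ∀ t, t₀ ≤ t → V' t ≤ ω * max (V t) (V t₀) + c) :
    ∀ t, t₀ ≤ t →
      V t ≤ Real.exp (ω * (t - t₀)) * V t₀ + (c / ω) * Real.exp (ω * (t - t₀)) := by
  intro t ht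
  have hgronwall := le_gronwallBound_of_deriv_right_le_max (b := t)
    (fun x hx => (hderiv x hx.1).continuousAt.continuousWithinAt)
    (fun x hx => (hderiv x hx.1).hasDerivWithinAt) hω.le hc (hVnonneg t₀ le_rfl)
    (fun x hx => hineq x hx.1) t ⟨ht, le_rfl⟩
  exact hgronwall.trans (gronwallBound_le_exp_mul_add hω hc _)
end

section
/- Let x : [t₀, ∞) → ℝⁿ and e(t) := x(t₀) − x(t) (so ė = −ẋ). Suppose ‖ẋ(t)‖ ≤ G‖x(t)‖ + H‖e(t)‖ + C·W for constants G, H, C ≥ 0 and W ≥ 0 with W > 0 or x(t) ≠ 0. Define φ(t) := ‖e(t)‖/√(‖x(t)‖² + W²). Then, wherever φ is differentiable, φ'(t) ≤ (G + C) + (G + H + C)·φ(t) + H·φ(t)². -/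
/-! With `ψ = √(‖x‖² + W²)`, the identity `φ ψ = ‖e‖` and the product rule give
`φ' ψ = ‖e‖' - φ ψ'`. Both `‖·‖` and `a ↦ √(‖a‖² + W²)` are 1-Lipschitz, so `|‖e‖'| ≤ ‖ẋ‖` and
`|ψ'| ≤ ‖ẋ‖`, whence `φ' ψ ≤ (1 + φ) ‖ẋ‖`. As `‖x‖ ≤ ψ` and `W ≤ ψ`, the growth bound gives
`‖ẋ‖ ≤ (G + H φ + C) ψ`, and dividing by `ψ` yields `φ' ≤ (1 + φ) (G + H φ + C)`. -/

open Filter Topology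

theorem LipschitzWith.abs_le_of_hasDerivAt_comp {E : Type*} [NormedAddCommGroup E] [NormedSpace ℝ E]
    {N : E → ℝ} {K : NNReal} {f : ℝ → E} {f' : E} {m t : ℝ} (hN : LipschitzWith K N)
    (hf : HasDerivAt f f' t) (hm : HasDerivAt (fun s => N (f s)) m t) : |m| ≤ K * ‖f'‖ := by
  refine le_of_tendsto_of_tendsto' (hasDerivAt_iff_tendsto_slope.mp hm).abs
    ((hasDerivAt_iff_tendsto_slope.mp hf).norm.const_mul (K : ℝ)) fun s => ?_
  rw [slope_def_field, slope_def_module, norm_smul, abs_div, norm_inv, Real.norm_eq_abs,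
    div_eq_inv_mul, mul_left_comm]
  gcongr
  rw [← Real.dist_eq, ← dist_eq_norm]
  exact hN.dist_le_mul (f s) (f t)

theorem lipschitzWith_one_sqrt_sq_add_sq (W : ℝ) :
    LipschitzWith 1 (fun r : ℝ => √(r ^ 2 + W ^ 2)) := by
  -- `√(r² + W²) = |r + W i|`, and `r ↦ r + W i` is an isometry `ℝ → ℂ`
  have hg : (fun r : ℝ => √(r ^ 2 + W ^ 2)) = fun r : ℝ => ‖(r : ℂ) + W * Complex.I‖ := by
    ext r; simp [Complex.norm_eq_sqrt_sq_add_sq]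
  rw [hg]
  refine LipschitzWith.of_dist_le_mul fun a b => ?_
  rw [Real.dist_eq, NNReal.coe_one, one_mul]
  calc _ ≤ ‖((a : ℂ) + W * Complex.I) - (b + W * Complex.I)‖ := abs_norm_sub_norm_le _ _
    _ = dist a b := by simp [← Complex.ofReal_sub, Real.dist_eq]

theorem lipschitzWith_one_sqrt_norm_sq_add_sq {E : Type*} [SeminormedAddCommGroup E] (W : ℝ) :
    LipschitzWith 1 (fun a : E => √(‖a‖ ^ 2 + W ^ 2)) := by
  have := (lipschitzWith_one_sqrt_sq_add_sq W).comp (lipschitzWith_one_norm (E := E))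
  rwa [mul_one] at this

theorem HasDerivAt.mul_sqrt_le_of_norm_div_sqrt {E F : Type*} [NormedAddCommGroup E]
    [NormedSpace ℝ E] [NormedAddCommGroup F] [InnerProductSpace ℝ F] {e : ℝ → E} {x : ℝ → F}
    {e' : E} {x' : F} {W t d : ℝ}
    (hd : HasDerivAt (fun s => ‖e s‖ / √(‖x s‖ ^ 2 + W ^ 2)) d t)
    (he : HasDerivAt e e' t) (hx : HasDerivAt x x' t) (hpos : 0 < ‖x t‖ ^ 2 + W ^ 2) :
    d * √(‖x t‖ ^ 2 + W ^ 2) ≤ ‖e'‖ + ‖e t‖ / √(‖x t‖ ^ 2 + W ^ 2) * ‖x'‖ := by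
  set ψ : ℝ → ℝ := fun s => √(‖x s‖ ^ 2 + W ^ 2)
  set φ : ℝ → ℝ := fun s => ‖e s‖ / ψ s
  obtain ⟨ψ', hψ⟩ : ∃ ψ', HasDerivAt ψ ψ' t :=
    ⟨_, ((hx.differentiableAt.norm_sq ℝ).add_const _ |>.sqrt hpos.ne').hasDerivAt⟩
  have hψ_bound : |ψ'| ≤ ‖x'‖ := by
    simpa using (lipschitzWith_one_sqrt_norm_sq_add_sq W).abs_le_of_hasDerivAt_comp hx hψ
  -- `φ * ψ = ‖e‖` holds near `t` because `ψ` stays positive there by continuity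
  have hψ_pos : ∀ᶠ s in 𝓝 t, 0 < ψ s :=
    hψ.continuousAt.eventually (lt_mem_nhds (Real.sqrt_pos.mpr hpos))
  have hnorm : HasDerivAt (fun s => ‖e s‖) (d * ψ t + φ t * ψ') t :=
    (hd.mul hψ).congr_of_eventuallyEq <| hψ_pos.mono fun s hs => (div_mul_cancel₀ _ hs.ne').symm
  have hnorm_bound : |d * ψ t + φ t * ψ'| ≤ ‖e'‖ := by
    simpa using lipschitzWith_one_norm.abs_le_of_hasDerivAt_comp he hnorm
  have hφ : 0 ≤ φ t := by positivity
  calc d * ψ t = (d * ψ t + φ t * ψ') - φ t * ψ' := by ring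
    _ ≤ ‖e'‖ + φ t * ‖x'‖ := by
      have := abs_le.mp hnorm_bound
      have := abs_le.mp hψ_bound
      nlinarith

theorem stmt_14_general (n : ℕ) (t₀ G H C W : ℝ) (hG : 0 ≤ G)
    (hC : 0 ≤ C)
    (x x' : ℝ → EuclideanSpace ℝ (Fin n))
    (hx : ∀ t, HasDerivAt x (x' t) t)
    (hnd : 0 < W ∨ ∀ t, x t ≠ 0)
    (hbound : ∀ t, ‖x' t‖ ≤ G * ‖x t‖ + H * ‖x t₀ - x t‖ + C * W) :
    ∀ t d,
      HasDerivAt (fun s => ‖x t₀ - x s‖ / Real.sqrt (‖x s‖ ^ 2 + W ^ 2)) d t →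
      d ≤ (G + C) + (G + H + C) * (‖x t₀ - x t‖ / Real.sqrt (‖x t‖ ^ 2 + W ^ 2)) +
            H * (‖x t₀ - x t‖ / Real.sqrt (‖x t‖ ^ 2 + W ^ 2)) ^ 2 := by
  intro t d hd
  have hpos : 0 < ‖x t‖ ^ 2 + W ^ 2 := by
    rcases hnd with hW | hx0
    · positivity
    · have := norm_pos_iff.mpr (hx0 t)
      positivity
  set ψ := √(‖x t‖ ^ 2 + W ^ 2)
  set φ := ‖x t₀ - x t‖ / ψ
  have hψ : 0 < ψ := Real.sqrt_pos.mpr hpos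
  have hφ : 0 ≤ φ := by positivity
  have hchain : d * ψ ≤ (1 + φ) * ‖x' t‖ := by
    have := hd.mul_sqrt_le_of_norm_div_sqrt ((hx t).const_sub (x t₀)) (hx t) hpos
    rw [norm_neg] at this
    linarith
  have hx_le : ‖x t‖ ≤ ψ := Real.le_sqrt_of_sq_le (le_add_of_nonneg_right (sq_nonneg W))
  have hW_le : W ≤ ψ := Real.le_sqrt_of_sq_le (le_add_of_nonneg_left (sq_nonneg _))
  have hx' : ‖x' t‖ ≤ (G + H * φ + C) * ψ := by
    have he : ‖x t₀ - x t‖ = φ * ψ := (div_mul_cancel₀ _ hψ.ne').symm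
    calc ‖x' t‖ ≤ G * ‖x t‖ + H * ‖x t₀ - x t‖ + C * W := hbound t
      _ ≤ G * ψ + H * (φ * ψ) + C * ψ := by rw [he]; gcongr
      _ = (G + H * φ + C) * ψ := by ring
  have hkey : d * ψ ≤ (1 + φ) * (G + H * φ + C) * ψ := by
    calc d * ψ ≤ (1 + φ) * ‖x' t‖ := hchain
      _ ≤ (1 + φ) * ((G + H * φ + C) * ψ) := by gcongr
      _ = (1 + φ) * (G + H * φ + C) * ψ := by ring
  linear_combination le_of_mul_le_mul_right hkey hψ

theorem stmt_14 (n : ℕ) (t₀ G H C W : ℝ) (hG : 0 ≤ G) (hH : 0 ≤ H)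
    (hC : 0 ≤ C) (hW : 0 ≤ W)
    (x x' : ℝ → EuclideanSpace ℝ (Fin n))
    (hx : ∀ t, HasDerivAt x (x' t) t)
    (hnd : 0 < W ∨ ∀ t, x t ≠ 0)
    (hbound : ∀ t, ‖x' t‖ ≤ G * ‖x t‖ + H * ‖x t₀ - x t‖ + C * W) :
    ∀ t d,
      HasDerivAt (fun s => ‖x t₀ - x s‖ / Real.sqrt (‖x s‖ ^ 2 + W ^ 2)) d t →
      d ≤ (G + C) + (G + H + C) * (‖x t₀ - x t‖ / Real.sqrt (‖x t‖ ^ 2 + W ^ 2)) +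
            H * (‖x t₀ - x t‖ / Real.sqrt (‖x t‖ ^ 2 + W ^ 2)) ^ 2 :=
  stmt_14_general n t₀ G H C W hG hC x x' hx hnd hbound
end

section
/- Let λ > 0 and suppose V : [0,∞) → ℝ satisfies, over a finite partition 0 = s₀ < s₁ < ... < s_N = t, on each interval [s_j, s_{j+1}) either V(s) ≤ e^{−ω₁(s − s_j)}V(s_j) + c (a 'good' interval) or V(s) ≤ e^{ω₂(s − s_j)}V(s_j) + c·e^{ω₂(s − s_j)} (a 'bad' interval), with ω₁, ω₂ > 0, c ≥ 0, and V continuous at the partition points. Then V(t) ≤ e^{−ω₁·|G| + ω₂·|B|}·V(0) + c·Σ_{j=0}^{N−1} e^{−ω₁·|G ∩ [s_{j+1}, t]| + ω₂·|B ∩ [s_j, t]|}, where |G| and |B| denote the total lengths of good and bad intervals in [0,t]. -/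
/-!
Let `r j` (`intervalRate`) be `-ω₁` times the length of the `j`-th interval if it is good and `ω₂`
times its length if it is bad. Passing to the right endpoint by continuity, each interval gives
`V (s (j+1)) ≤ exp (r j) * V (s j) + c * exp (ω₂ * b j)`, with `b j` the length of the interval if it
is bad and `0` otherwise. Unrolling this affine recursion produces the products
`∏ exp (r i) = exp (∑ r i)` over the intervals after the `j`-th, which are the exponentials in the bound.
-/

/-- Total length of the "good" (resp. complement: "bad") intervals among
intervals `[s j, s (j+1))` for `j ∈ [k, N)`. -/
noncomputable def goodLen (s : ℕ → ℝ) (good : ℕ → Prop) [DecidablePred good]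
    (N k : ℕ) : ℝ :=
  ∑ j ∈ Finset.Ico k N, if good j then s (j + 1) - s j else 0

noncomputable def badLen (s : ℕ → ℝ) (good : ℕ → Prop) [DecidablePred good]
    (N k : ℕ) : ℝ :=
  ∑ j ∈ Finset.Ico k N, if good j then 0 else s (j + 1) - s j

open Finset Real

theorem le_of_forall_mem_Ico_le {α β : Type*} [TopologicalSpace α] [LinearOrder α]
    [OrderTopology α] [DenselyOrdered α] [TopologicalSpace β] [Preorder β]
    [OrderClosedTopology β] {f g : α → β} {a b : α} (hab : a < b)
    (hf : ContinuousOn f (Set.Icc a b)) (hg : ContinuousOn g (Set.Icc a b))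
    (h : ∀ u ∈ Set.Ico a b, f u ≤ g u) : f b ≤ g b := by
  rw [← closure_Ico hab.ne] at hf hg
  exact le_on_closure h hf hg (by rw [closure_Ico hab.ne]; exact Set.right_mem_Icc.2 hab.le)

theorem le_prod_mul_add_sum_of_le_mul_add {R : Type*} [CommSemiring R] [PartialOrder R]
    [IsOrderedRing R] {v a d : ℕ → R} {n : ℕ} (ha : ∀ j < n, 0 ≤ a j)
    (h : ∀ j < n, v (j + 1) ≤ a j * v j + d j) :
    v n ≤ (∏ j ∈ range n, a j) * v 0 + ∑ j ∈ range n, (∏ i ∈ Ico (j + 1) n, a i) * d j := by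
  induction n with
  | zero => simp
  | succ n ih =>
    have ih := ih (fun j hj => ha j (by omega)) (fun j hj => h j (by omega))
    calc v (n + 1) ≤ a n * v n + d n := h n n.lt_succ_self
      _ ≤ a n * ((∏ j ∈ range n, a j) * v 0 +
            ∑ j ∈ range n, (∏ i ∈ Ico (j + 1) n, a i) * d j) + d n := by
        gcongr
        exact ha n n.lt_succ_self
      _ = _ := by
        have hsum : ∑ j ∈ range n, (∏ i ∈ Ico (j + 1) (n + 1), a i) * d j =
            a n * ∑ j ∈ range n, (∏ i ∈ Ico (j + 1) n, a i) * d j := by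
          rw [mul_sum]
          exact sum_congr rfl fun j hj => by rw [prod_Ico_succ_top (mem_range.1 hj)]; ring
        rw [prod_range_succ, sum_range_succ, Ico_self, prod_empty, hsum]
        ring

section Intervals

variable (ω₁ ω₂ : ℝ) (s : ℕ → ℝ) (good : ℕ → Prop) [DecidablePred good]

noncomputable def intervalRate (j : ℕ) : ℝ :=
  -ω₁ * (if good j then s (j + 1) - s j else 0) + ω₂ * (if good j then 0 else s (j + 1) - s j)

theorem neg_mul_goodLen_add_mul_badLen (N k : ℕ) :
    -ω₁ * goodLen s good N k + ω₂ * badLen s good N k =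
      ∑ j ∈ Ico k N, intervalRate ω₁ ω₂ s good j := by
  simp only [goodLen, badLen, intervalRate, mul_sum, sum_add_distrib]

theorem neg_mul_goodLen_succ_add_mul_badLen {N j : ℕ} (hj : j < N) :
    -ω₁ * goodLen s good N (j + 1) + ω₂ * badLen s good N j =
      ∑ i ∈ Ico (j + 1) N, intervalRate ω₁ ω₂ s good i +
        ω₂ * (if good j then 0 else s (j + 1) - s j) := by
  rw [badLen, sum_eq_sum_Ico_succ_bot hj, ← badLen, ← neg_mul_goodLen_add_mul_badLen]
  ring

end Intervals

theorem stmt_16_general (ω₁ ω₂ c t : ℝ)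
    (N : ℕ) (s : ℕ → ℝ) (good : ℕ → Prop) [DecidablePred good]
    (hs0 : s 0 = 0) (hsN : s N = t)
    (hmono : ∀ j, j < N → s j < s (j + 1))
    (V : ℝ → ℝ) (hVcont : Continuous V)
    (hgood : ∀ j, j < N → good j →
      ∀ u ∈ Set.Ico (s j) (s (j + 1)),
        V u ≤ Real.exp (-ω₁ * (u - s j)) * V (s j) + c)
    (hbad : ∀ j, j < N → ¬ good j →
      ∀ u ∈ Set.Ico (s j) (s (j + 1)),
        V u ≤ Real.exp (ω₂ * (u - s j)) * V (s j) + c * Real.exp (ω₂ * (u - s j))) :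
    V t ≤ Real.exp (-ω₁ * goodLen s good N 0 + ω₂ * badLen s good N 0) * V 0 +
        c * ∑ j ∈ Finset.range N,
              Real.exp (-ω₁ * goodLen s good N (j + 1) + ω₂ * badLen s good N j) := by
  have step : ∀ j < N, V (s (j + 1)) ≤ exp (intervalRate ω₁ ω₂ s good j) * V (s j) +
      c * exp (ω₂ * if good j then 0 else s (j + 1) - s j) := by
    intro j hj
    by_cases hg : good j
    · simpa [intervalRate, hg] using le_of_forall_mem_Ico_le (hmono j hj)
        hVcont.continuousOn (by fun_prop) (hgood j hj hg)
    · simpa [intervalRate, hg] using le_of_forall_mem_Ico_le (hmono j hj)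
        hVcont.continuousOn (by fun_prop) (hbad j hj hg)
  have hunrolled := le_prod_mul_add_sum_of_le_mul_add (v := fun j => V (s j))
    (fun j _ => (exp_pos (intervalRate ω₁ ω₂ s good j)).le) step
  rw [hsN, hs0] at hunrolled
  calc V t ≤ _ := hunrolled
    _ = _ := by
      rw [neg_mul_goodLen_add_mul_badLen, exp_sum, ← range_eq_Ico, mul_sum]
      congr 1
      refine sum_congr rfl fun j hj => ?_
      rw [neg_mul_goodLen_succ_add_mul_badLen _ _ _ _ (mem_range.1 hj), exp_add, exp_sum]
      ring

theorem stmt_16 (ω₁ ω₂ c t : ℝ) (hω₁ : 0 < ω₁) (hω₂ : 0 < ω₂) (hc : 0 ≤ c)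
    (N : ℕ) (hN : 0 < N) (s : ℕ → ℝ) (good : ℕ → Prop) [DecidablePred good]
    (hs0 : s 0 = 0) (hsN : s N = t)
    (hmono : ∀ j, j < N → s j < s (j + 1))
    (V : ℝ → ℝ) (hVcont : Continuous V) (hVnonneg : ∀ u, 0 ≤ V u)
    (hgood : ∀ j, j < N → good j →
      ∀ u ∈ Set.Ico (s j) (s (j + 1)),
        V u ≤ Real.exp (-ω₁ * (u - s j)) * V (s j) + c)
    (hbad : ∀ j, j < N → ¬ good j →
      ∀ u ∈ Set.Ico (s j) (s (j + 1)),
        V u ≤ Real.exp (ω₂ * (u - s j)) * V (s j) + c * Real.exp (ω₂ * (u - s j))) :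
    V t ≤ Real.exp (-ω₁ * goodLen s good N 0 + ω₂ * badLen s good N 0) * V 0 +
        c * ∑ j ∈ Finset.range N,
              Real.exp (-ω₁ * goodLen s good N (j + 1) + ω₂ * badLen s good N j) :=
  stmt_16_general ω₁ ω₂ c t N s good hs0 hsN hmono V hVcont hgood hbad
end
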